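/- For every even integer n ≥ 2, there exists a bijection between the set of derangements of {1,2,…,n} other than the fixed-point-free involution (1,2)(3,4)⋯(n-1,n) and the set of permutations of {1,2,…,n} with exactly one fixed point. -/
import Mathlib


/-- The function on `Fin n` sending each even value `2k` to `2k+1` (when `2k+1 < n`) and
each odd value `2k+1` to `2k`.  In 1-indexed notation, for `n` even, this is the
fixed-point-free involution `(1,2)(3,4)⋯(n-1,n)`. -/
def pairSwapFun (n : ℕ) : Fin n → Fin n := fun i =>
  if i.val % 2 = 0 then
    if h : i.val + 1 < n then ⟨i.val + 1, h⟩ else i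
  else ⟨i.val - 1, lt_of_le_of_lt (Nat.sub_le _ _) i.isLt⟩

lemma pairSwapFun_involutive (n : ℕ) : Function.Involutive (pairSwapFun n) := by
  intro i
  unfold pairSwapFun
  split_ifs <;>
    first
      | rfl
      | (apply Fin.ext; simp_all; omega)

/-- The involution `(1,2)(3,4)⋯(n-1,n)` (for `n` even) as a permutation of `Fin n`. -/
def pairSwapPerm (n : ℕ) : Equiv.Perm (Fin n) :=
  (pairSwapFun_involutive n).toPerm

open Equiv Function derangements Fintype

/-- For `n` even, `pairSwapPerm n` has no fixed points. -/
lemma pairSwapPerm_ne {n : ℕ} (hne : Even n) (i : Fin n) : pairSwapPerm n i ≠ i := by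
  have hn2 := Nat.even_iff.mp hne
  have hi := i.isLt
  intro h
  have hv := congrArg Fin.val h
  simp only [pairSwapPerm, Involutive.coe_toPerm, pairSwapFun] at hv
  split_ifs at hv with h1 h2 <;> simp_all <;> omega

/-- For every even integer `n ≥ 2`, there is a bijection between the set of derangements
of `Fin n` other than the fixed-point-free involution `(1,2)(3,4)⋯(n-1,n)` and the set of
permutations of `Fin n` with exactly one fixed point. -/
theorem derangements_minus_involution_equiv_one_fixed_point (n : ℕ) (hn : 2 ≤ n)
    (hne : Even n) :
    Nonempty
      ({π : Equiv.Perm (Fin n) // (∀ i : Fin n, π i ≠ i) ∧ π ≠ pairSwapPerm n} ≃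
        {π : Equiv.Perm (Fin n) // ∃! i : Fin n, π i = i}) := by
  classical
  have hp : pairSwapPerm n ∈ derangements (Fin n) := fun i => pairSwapPerm_ne hne i
  -- the left-hand type is the derangements minus one point
  have e1 : {π : Equiv.Perm (Fin n) // (∀ i : Fin n, π i ≠ i) ∧ π ≠ pairSwapPerm n} ≃
      {x : derangements (Fin n) // x ≠ ⟨pairSwapPerm n, hp⟩} :=
    { toFun := fun x => ⟨⟨x.1, x.2.1⟩, fun hc => x.2.2 (congrArg Subtype.val hc)⟩
      invFun := fun x => ⟨x.1.1, x.1.2, fun hc => x.2 (Subtype.ext hc)⟩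
      left_inv := fun x => rfl
      right_inv := fun x => rfl }
  have cardA : card {π : Equiv.Perm (Fin n) // (∀ i : Fin n, π i ≠ i) ∧ π ≠ pairSwapPerm n}
      = numDerangements n - 1 := by
    rw [card_congr e1]
    have : card {x : derangements (Fin n) // x ≠ ⟨pairSwapPerm n, hp⟩}
        = card (derangements (Fin n)) - 1 := by
      have := Fintype.card_subtype_compl (fun x : derangements (Fin n) => x = ⟨pairSwapPerm n, hp⟩)
      simp only [Fintype.card_subtype_eq] at this; exact this
    rw [this, card_derangements_eq_numDerangements, card_fin]
  -- counting permutations whose fixed-point set is exactly `{a}`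
  have hcompl : ∀ a : Fin n, card ({a}ᶜ : Set (Fin n)) = n - 1 := by
    intro a
    rw [Fintype.card_compl_set]
    simp
  have e3 : ∀ a : Fin n,
      derangements ({a}ᶜ : Set (Fin n)) ≃ {f : Equiv.Perm (Fin n) // fixedPoints f = {a}} := by
    intro a
    refine (derangements.subtypeEquiv (· ∈ ({a}ᶜ : Set (Fin n)))).trans
      (subtypeEquivRight fun f => ?_)
    rw [Set.ext_iff]
    constructor
    · intro h x
      have := (h x).symm
      simpa [eq_comm, mem_fixedPoints_iff, Set.mem_compl_iff] using this
    · intro h x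
      have := (h x).symm
      simpa [eq_comm, mem_fixedPoints_iff, Set.mem_compl_iff] using this
  have e2 : (Σ a : Fin n, {f : Equiv.Perm (Fin n) // fixedPoints f = {a}}) ≃
      {π : Equiv.Perm (Fin n) // ∃! i : Fin n, π i = i} := by
    refine Equiv.ofBijective
      (fun x => ⟨x.2.1, x.1, ?_, ?_⟩) ⟨?_, ?_⟩
    · have : x.1 ∈ fixedPoints x.2.1 := by rw [x.2.2]; rfl
      exact this
    · intro y hy
      have : y ∈ fixedPoints x.2.1 := hy
      rwa [x.2.2] at this
    · rintro ⟨a, f, hf⟩ ⟨b, g, hg⟩ h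
      have hfg : f = g := congrArg Subtype.val h
      subst hfg
      have hab : a = b := by
        have : ({a} : Set (Fin n)) = {b} := by rw [← hf, ← hg]
        simpa using this
      subst hab
      rfl
    · rintro ⟨π, a, ha, hu⟩
      refine ⟨⟨a, π, ?_⟩, rfl⟩
      exact Set.eq_singleton_iff_unique_mem.mpr ⟨ha, hu⟩
  have cardB : card {π : Equiv.Perm (Fin n) // ∃! i : Fin n, π i = i}
      = n * numDerangements (n - 1) := by
    rw [← card_congr e2, card_sigma]
    have : ∀ a : Fin n, card {f : Equiv.Perm (Fin n) // fixedPoints f = {a}}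
        = numDerangements (n - 1) := by
      intro a
      rw [← card_congr (e3 a), card_derangements_eq_numDerangements, hcompl a]
    simp [this, Finset.sum_const, Finset.card_fin]
  -- arithmetic: for `n` even, `numDerangements n - 1 = n * numDerangements (n-1)`
  obtain ⟨m, rfl⟩ : ∃ m, n = m + 1 := ⟨n - 1, by omega⟩
  have hmodd : Odd m := by
    rcases Nat.even_or_odd m with h | h
    · exfalso; rcases hne with ⟨k, hk⟩; rcases h with ⟨j, hj⟩; omega
    · exact h
  have hZ : (numDerangements (m + 1) : ℤ) = (m + 1) * numDerangements m + 1 := by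
    rw [numDerangements_succ, hmodd.neg_one_pow]
    ring
  have hNat : numDerangements (m + 1) = (m + 1) * numDerangements m + 1 := by
    exact_mod_cast hZ
  refine ⟨Fintype.equivOfCardEq ?_⟩
  rw [cardA, cardB]
  simp only [Nat.add_sub_cancel]
  omega
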